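/- Fix κ > 0, β ∈ ℝ, and a, b > 0 with a² + b² = 1. Let γ_k = exp(−κ(2πk)²) and define f^n_1 = (aγ₁)^n, f^n_{2^ℓ} = (aγ₁)^{n−ℓ} b ∏_{s=1}^{ℓ} γ_{2^s} for 1 ≤ ℓ ≤ n, f^n_k = 0 otherwise. Then the series c_β = Σ_{ℓ=1}^{∞} (2^ℓ)^{2β} ((aγ₁)^{-ℓ} b ∏_{s=1}^{ℓ} γ_{2^s})² converges, and Σ_{k>1} k^{2β}|f^n_k|² = (aγ₁)^{2n} c_{n,β} where c_{n,β} ↑ c_β; consequently ‖f^n‖²_{H^β} / |f^n_1|² → 1 + c_β as n → ∞, so all Sobolev norms ‖f^n‖_{H^β} decay at the rate (aγ₁)^n regardless of β. -/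

import Mathlib

/-- Pulsed-diffusion damping factor `γ_k = exp(−κ(2πk)²)`. -/
noncomputable def gam (κ : ℝ) (k : ℕ) : ℝ := Real.exp (-κ * (2 * Real.pi * k) ^ 2)

/-- The `ℓ`-th term `(2^ℓ)^{2β} ((aγ₁)^{−ℓ} b ∏_{s=1}^ℓ γ_{2^s})²` of the series `c_β`. -/
noncomputable def dterm (κ a b β : ℝ) (ℓ : ℕ) : ℝ :=
  ((2 : ℝ) ^ ℓ) ^ (2 * β) *
    (((a * gam κ 1) ^ ℓ)⁻¹ * b * ∏ s ∈ Finset.Icc 1 ℓ, gam κ (2 ^ s)) ^ 2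

/-!
Each term of the series is the previous one times `2^{2β} (γ_{2^{ℓ+1}} / (aγ₁))²`, and this ratio
tends to `0` because `γ_k → 0`; hence `c_β` converges. The profile `f^n` lives on the mode `1` and the
dyadic modes `2^ℓ`, `1 ≤ ℓ ≤ n`, where `|f^n_{2^ℓ}|² = (aγ₁)^{2n} ((aγ₁)^{-ℓ} b ∏ γ_{2^s})²`. Dividing by
`|f^n_1|² = (aγ₁)^{2n}` leaves `1` plus the `n`-th partial sum of `c_β`.
-/

open Filter Topology Finset

theorem summable_of_eq_mul_of_tendsto_zero {R : Type*} [NormedRing R] [CompleteSpace R]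
    {u r : ℕ → R} (hu : ∀ n, u (n + 1) = u n * r n) (hr : Tendsto r atTop (𝓝 0)) :
    Summable u := by
  refine summable_of_ratio_norm_eventually_le (r := 1 / 2) (by norm_num) ?_
  filter_upwards [(tendsto_zero_iff_norm_tendsto_zero.mp hr).eventually_le_const
    (show (0 : ℝ) < 1 / 2 by norm_num)] with n hn
  calc ‖u (n + 1)‖ ≤ ‖u n‖ * ‖r n‖ := hu n ▸ norm_mul_le _ _
    _ ≤ ‖u n‖ * (1 / 2) := by gcongr
    _ = 1 / 2 * ‖u n‖ := mul_comm _ _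

theorem tendsto_sum_Icc_one_tsum {M : Type*} [AddCommGroup M] [UniformSpace M]
    [IsUniformAddGroup M] [CompleteSpace M] {u : ℕ → M} (hu : Summable u) :
    Tendsto (fun n => ∑ ℓ ∈ Icc 1 n, u ℓ) atTop (𝓝 (∑' ℓ : {ℓ : ℕ // 1 ≤ ℓ}, u ℓ)) := by
  have h : HasSum (Set.indicator {ℓ | 1 ≤ ℓ} u) (∑' ℓ : {ℓ : ℕ // 1 ≤ ℓ}, u ℓ) := by
    rw [← hasSum_subtype_iff_indicator]
    exact (hu.subtype (1 ≤ ·)).hasSum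
  refine ((tendsto_add_atTop_iff_nat 1).mpr h.tendsto_sum_nat).congr fun n => ?_
  simp only [Set.indicator_apply, Set.mem_ofPred_eq, ← sum_filter]
  congr 1
  ext ℓ
  simp only [mem_filter, mem_range, mem_Icc]
  omega

theorem tsum_one_lt_eq_sum_two_pow {M : Type*} [AddCommMonoid M] [TopologicalSpace M]
    (g : ℕ → M) (n : ℕ) (hg : ∀ k, 1 < k → (∀ ℓ, 1 ≤ ℓ → ℓ ≤ n → k ≠ 2 ^ ℓ) → g k = 0) :
    ∑' k : {k : ℕ // 1 < k}, g k = ∑ ℓ ∈ Icc 1 n, g (2 ^ ℓ) := by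
  rw [show ∑' k : {k : ℕ // 1 < k}, g k = _ from tsum_subtype {k | 1 < k} g,
    tsum_eq_sum (s := (Icc 1 n).image (2 ^ ·)),
    sum_image fun _ _ _ _ h => Nat.pow_right_injective le_rfl h]
  · refine sum_congr rfl fun ℓ hℓ => Set.indicator_of_mem ?_ g
    exact Nat.one_lt_two_pow (by simp at hℓ; omega)
  · intro k hk
    refine Set.indicator_apply_eq_zero.mpr fun hk1 => hg k hk1 fun ℓ h1 h2 hkℓ => hk ?_
    exact mem_image.mpr ⟨ℓ, mem_Icc.mpr ⟨h1, h2⟩, hkℓ.symm⟩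

theorem sq_pow_sub_mul {K : Type*} [Field K] {q : K} (hq : q ≠ 0) {ℓ n : ℕ} (hℓ : ℓ ≤ n) (c : K) :
    (q ^ (n - ℓ) * c) ^ 2 = q ^ (2 * n) * ((q ^ ℓ)⁻¹ * c) ^ 2 := by
  rw [pow_sub₀ q hq hℓ, pow_mul', mul_pow, mul_pow, mul_pow]
  ring

theorem gam_pos (κ : ℝ) (k : ℕ) : 0 < gam κ k := Real.exp_pos _

theorem tendsto_gam_atTop {κ : ℝ} (hκ : 0 < κ) : Tendsto (gam κ) atTop (𝓝 0) := by
  have hsq : Tendsto (fun k : ℕ => (k : ℝ) ^ 2) atTop atTop :=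
    (tendsto_pow_atTop two_ne_zero).comp tendsto_natCast_atTop_atTop
  have hexp : Tendsto (fun k : ℕ => -(κ * (2 * Real.pi) ^ 2) * (k : ℝ) ^ 2) atTop atBot :=
    hsq.const_mul_atTop_of_neg (neg_lt_zero.mpr (by positivity))
  refine (Real.tendsto_exp_atBot.comp hexp).congr fun k => ?_
  simp only [Function.comp_apply, gam]
  ring_nf

theorem dterm_succ (κ a b β : ℝ) (ℓ : ℕ) :
    dterm κ a b β (ℓ + 1) =
      dterm κ a b β ℓ * ((2 : ℝ) ^ (2 * β) * ((a * gam κ 1)⁻¹ * gam κ (2 ^ (ℓ + 1))) ^ 2) := by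
  unfold dterm
  rw [prod_Icc_succ_top (Nat.le_add_left 1 ℓ), pow_succ (2 : ℝ) ℓ,
    Real.mul_rpow (by positivity) zero_le_two, pow_succ (a * gam κ 1) ℓ, mul_inv]
  ring

theorem summable_dterm {κ : ℝ} (hκ : 0 < κ) (a b β : ℝ) : Summable (dterm κ a b β) := by
  refine summable_of_eq_mul_of_tendsto_zero (dterm_succ κ a b β) ?_
  have hγ : Tendsto (fun ℓ : ℕ => gam κ (2 ^ (ℓ + 1))) atTop (𝓝 0) :=
    (tendsto_gam_atTop hκ).comp <| (tendsto_pow_atTop_atTop_of_one_lt (α := ℕ) one_lt_two).comp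
      (tendsto_add_atTop_nat 1)
  simpa using ((hγ.const_mul (a * gam κ 1)⁻¹).pow 2).const_mul ((2 : ℝ) ^ (2 * β))

theorem norm_ofReal_sq (x : ℝ) : ‖(x : ℂ)‖ ^ 2 = x ^ 2 := by
  rw [Complex.norm_real, Real.norm_eq_abs, sq_abs]

theorem stmt18_general (κ a b β : ℝ) (hκ : 0 < κ) (ha : 0 < a)
    (f : ℕ → ℕ → ℂ)
    (hf1 : ∀ n, f n 1 = ((a * gam κ 1 : ℝ) : ℂ) ^ n)
    (hf2 : ∀ n ℓ, 1 ≤ ℓ → ℓ ≤ n → f n (2 ^ ℓ) =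
      ((a * gam κ 1 : ℝ) : ℂ) ^ (n - ℓ) * (b : ℂ) *
        ∏ s ∈ Finset.Icc 1 ℓ, ((gam κ (2 ^ s) : ℝ) : ℂ))
    (hf0 : ∀ n k, k ≠ 1 → (∀ ℓ, 1 ≤ ℓ → ℓ ≤ n → k ≠ 2 ^ ℓ) → f n k = 0) :
    Summable (dterm κ a b β) ∧
    (∀ n, (∑' k : {k : ℕ // 1 < k}, ((k.1 : ℝ)) ^ (2 * β) * ‖f n k.1‖ ^ 2) =
      (a * gam κ 1) ^ (2 * n) * ∑ ℓ ∈ Finset.Icc 1 n, dterm κ a b β ℓ) ∧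
    Filter.Tendsto
      (fun n => (‖f n 1‖ ^ 2 +
        ∑' k : {k : ℕ // 1 < k}, ((k.1 : ℝ)) ^ (2 * β) * ‖f n k.1‖ ^ 2) / ‖f n 1‖ ^ 2)
      Filter.atTop
      (nhds (1 + ∑' ℓ : {ℓ : ℕ // 1 ≤ ℓ}, dterm κ a b β ℓ.1)) := by
  have hq : a * gam κ 1 ≠ 0 := (mul_pos ha (gam_pos κ 1)).ne'
  have hsum := summable_dterm hκ a b β
  have hhigh : ∀ n, (∑' k : {k : ℕ // 1 < k}, ((k.1 : ℝ)) ^ (2 * β) * ‖f n k.1‖ ^ 2) =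
      (a * gam κ 1) ^ (2 * n) * ∑ ℓ ∈ Icc 1 n, dterm κ a b β ℓ := by
    intro n
    rw [tsum_one_lt_eq_sum_two_pow (fun k => (k : ℝ) ^ (2 * β) * ‖f n k‖ ^ 2) n
      fun k hk hk2 => by simp [hf0 n k hk.ne' hk2], mul_sum]
    refine sum_congr rfl fun ℓ hℓ => ?_
    obtain ⟨hℓ1, hℓn⟩ := mem_Icc.mp hℓ
    have hfℓ : f n (2 ^ ℓ) =
        (((a * gam κ 1) ^ (n - ℓ) * (b * ∏ s ∈ Icc 1 ℓ, gam κ (2 ^ s)) : ℝ) : ℂ) := by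
      rw [hf2 n ℓ hℓ1 hℓn]
      push_cast
      ring
    rw [hfℓ, norm_ofReal_sq, sq_pow_sub_mul hq hℓn, dterm]
    push_cast
    ring
  have hlow : ∀ n, ‖f n 1‖ ^ 2 = (a * gam κ 1) ^ (2 * n) := fun n => by
    rw [hf1, ← Complex.ofReal_pow, norm_ofReal_sq, ← pow_mul']
  refine ⟨hsum, hhigh, (tendsto_const_nhds.add (tendsto_sum_Icc_one_tsum hsum)).congr fun n => ?_⟩
  rw [hhigh, hlow, add_div, div_self (pow_ne_zero _ hq), mul_div_cancel_left₀ _ (pow_ne_zero _ hq)]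

theorem stmt18 (κ a b β : ℝ) (hκ : 0 < κ) (ha : 0 < a) (hb : 0 < b)
    (hab : a ^ 2 + b ^ 2 = 1)
    (f : ℕ → ℕ → ℂ)
    (hf1 : ∀ n, f n 1 = ((a * gam κ 1 : ℝ) : ℂ) ^ n)
    (hf2 : ∀ n ℓ, 1 ≤ ℓ → ℓ ≤ n → f n (2 ^ ℓ) =
      ((a * gam κ 1 : ℝ) : ℂ) ^ (n - ℓ) * (b : ℂ) *
        ∏ s ∈ Finset.Icc 1 ℓ, ((gam κ (2 ^ s) : ℝ) : ℂ))
    (hf0 : ∀ n k, k ≠ 1 → (∀ ℓ, 1 ≤ ℓ → ℓ ≤ n → k ≠ 2 ^ ℓ) → f n k = 0) :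
    Summable (dterm κ a b β) ∧
    (∀ n, (∑' k : {k : ℕ // 1 < k}, ((k.1 : ℝ)) ^ (2 * β) * ‖f n k.1‖ ^ 2) =
      (a * gam κ 1) ^ (2 * n) * ∑ ℓ ∈ Finset.Icc 1 n, dterm κ a b β ℓ) ∧
    Filter.Tendsto
      (fun n => (‖f n 1‖ ^ 2 +
        ∑' k : {k : ℕ // 1 < k}, ((k.1 : ℝ)) ^ (2 * β) * ‖f n k.1‖ ^ 2) / ‖f n 1‖ ^ 2)
      Filter.atTop
      (nhds (1 + ∑' ℓ : {ℓ : ℕ // 1 ≤ ℓ}, dterm κ a b β ℓ.1)) :=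
  stmt18_general κ a b β hκ ha f hf1 hf2 hf0
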